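/- arXiv:0907.3681 — 2 statements merged into one kernel-verified Lean document; each statement's English description precedes it below -/
import Mathlib

section
/- Let $F$ be a nonabelian free group with finite free basis $X$ of size at least 2. For any nontrivial elements $\gamma_1, \dots, \gamma_n \in F$ with $\|\gamma_j\|_X \leq d$ for all $j$, there exists a nontrivial element $\delta \in \bigcap_{j=1}^n \overline{\langle\gamma_j\rangle}$ with $\|\delta\|_X \leq 6 d n^2$. -/
/-!
Split the family into two halves of sizes `⌊m/2⌋` and `⌈m/2⌉`, obtain nontrivial `δ₁`, `δ₂` for the
halves recursively, and take `⁅δ₁, g δ₂ g⁻¹⁆`, where `g` has length at most one and is chosen so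
that `δ₁` and `g δ₂ g⁻¹` do not commute. The commutator lies in every normal subgroup containing
`δ₁` or `δ₂`, and the lengths obey `L(m) ≤ 2 L(⌊m/2⌋) + 2 L(⌈m/2⌉) + 4`, whence `L(m) + 5d ≤ 6dm²`.

Such a `g` exists because in a free group commutation is transitive on nontrivial elements and
centralizers are infinite cyclic (Nielsen–Schreier): if `a` commuted with `b`, `x b x⁻¹` and
`y b y⁻¹` for two basis elements `x ≠ y`, then `x²` and `y²` would both centralize `b`, hence commute.
-/

open scoped commutatorElement

namespace FreeGroup

variable {α : Type*}

theorem eq_one_of_commute_of_commute {a b : α} (hab : a ≠ b) {w : FreeGroup α}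
    (ha : Commute (of a) w) (hb : Commute (of b) w) : w = 1 := by
  classical
  by_contra hw
  obtain ⟨⟨x, e⟩, L, hL⟩ := List.exists_cons_of_ne_nil (mt toWord_eq_nil_iff.mp hw)
  obtain ⟨y, hyx, hy⟩ : ∃ y, y ≠ x ∧ Commute (of y) w := by
    by_cases hax : a = x
    · exact ⟨b, fun hbx => hab (hax.trans hbx.symm), hb⟩
    · exact ⟨a, hax, ha⟩
  -- `y ⬝ w` is already reduced, while `w ⬝ y` reduces to a sublist of `w ++ [y]`
  have hleft : (of y * w).toWord = (y, true) :: w.toWord := by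
    rw [toWord_mul, toWord_of, List.singleton_append]
    refine IsReduced.reduce_eq ?_
    have hw : IsReduced w.toWord := isReduced_toWord
    rw [hL] at hw ⊢
    exact List.isChain_cons_cons.mpr ⟨fun h => absurd h hyx, hw⟩
  have hsub := toWord_mul_sublist w (of y)
  rw [← hy.eq, hleft, toWord_of] at hsub
  have := hsub.eq_of_length (by simp)
  rw [hL] at this
  simp_all

theorem commute_of_of_iff {a b : α} : Commute (of a) (of b) ↔ a = b := by
  refine ⟨fun h => ?_, fun h => h ▸ Commute.refl _⟩
  by_contra hab
  exact of_ne_one a (eq_one_of_commute_of_commute hab (Commute.refl _) h.symm)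

instance [Subsingleton α] : IsCyclic (FreeGroup α) := by
  cases isEmpty_or_nonempty α
  · infer_instance
  · have : Unique α := uniqueOfSubsingleton (Classical.arbitrary α)
    infer_instance

end FreeGroup

namespace IsFreeGroup

variable {G : Type*} [Group G] [IsFreeGroup G]

theorem isCyclic_of_forall_commute {a : G} (ha : a ≠ 1) (h : ∀ g, Commute a g) : IsCyclic G := by
  let e := toFreeGroup G
  have : Subsingleton (Generators G) := by
    refine ⟨fun t₁ t₂ => by_contra fun ht => ha ?_⟩
    have hcomm (t : Generators G) : Commute (FreeGroup.of t) (e a) := by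
      simpa using ((h (e.symm (FreeGroup.of t))).map e).symm
    simpa using FreeGroup.eq_one_of_commute_of_commute ht (hcomm t₁) (hcomm t₂)
  exact e.isCyclic.mpr inferInstance

theorem isCyclic_centralizer {a : G} (ha : a ≠ 1) : IsCyclic (Subgroup.centralizer {a}) :=
  isCyclic_of_forall_commute (a := ⟨a, Subgroup.mem_centralizer_singleton_iff.mpr rfl⟩)
    (fun h => ha (congrArg Subtype.val h))
    (fun g => Subtype.ext (Subgroup.mem_centralizer_singleton_iff.mp g.2).symm)

theorem commute_of_commute_of_commute {a b c : G} (ha : a ≠ 1) (hab : Commute a b)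
    (hac : Commute a c) : Commute b c := by
  have := isCyclic_centralizer ha
  have hb : b ∈ Subgroup.centralizer {a} := Subgroup.mem_centralizer_singleton_iff.mpr hab.eq.symm
  have hc : c ∈ Subgroup.centralizer {a} := Subgroup.mem_centralizer_singleton_iff.mpr hac.eq.symm
  exact congrArg Subtype.val (mul_comm' (⟨b, hb⟩ : Subgroup.centralizer {a}) ⟨c, hc⟩)

theorem commute_conj_of_commute_conj {b t g : G} (hb : b ≠ 1) (ht : Commute b (t * b * t⁻¹))
    (hg : Commute g b) : Commute (t * g * t⁻¹) b := by
  have hconj : Commute (t * g * t⁻¹) (t * b * t⁻¹) := by simpa using hg.map (MulAut.conj t)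
  exact (commute_of_commute_of_commute (conj_eq_one_iff.not.mpr hb) ht.symm hconj.symm).symm

end IsFreeGroup

theorem commute_sq_of_conj_eq_zpow {G : Type*} [Group G] [IsMulTorsionFree G] {s z : G}
    {k l : ℤ} (hk : s * z * s⁻¹ = z ^ k) (hl : s⁻¹ * z * s = z ^ l) : Commute (s ^ 2) z := by
  obtain rfl | hz := eq_or_ne z 1
  · exact Commute.one_right _
  have hkl : k * l = 1 := by
    have hzkl : z ^ (k * l) = z := calc
      z ^ (k * l) = (s * z * s⁻¹) ^ l := by rw [zpow_mul, hk]
      _ = s * (s⁻¹ * z * s) * s⁻¹ := by rw [conj_zpow, hl]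
      _ = z := by group
    have : z ^ (k * l - 1) = 1 := by rw [zpow_sub_one, hzkl, mul_inv_cancel]
    have := (IsMulTorsionFree.zpow_eq_one_iff_right hz).mp this
    omega
  have hconj : s * (s * z * s⁻¹) * s⁻¹ = z := by
    rw [hk, ← conj_zpow, hk, ← zpow_mul]
    rcases Int.eq_one_or_neg_one_of_mul_eq_one hkl with rfl | rfl <;> simp
  calc s ^ 2 * z = s * (s * z * s⁻¹) * s⁻¹ * s ^ 2 := by simp [sq, mul_assoc]
    _ = z * s ^ 2 := by rw [hconj]

theorem Subgroup.commutatorElement_conj_mem_of_mem_or_mem {G : Type*} [Group G]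
    {N : Subgroup G} [N.Normal] {a b : G} (g : G) (h : a ∈ N ∨ b ∈ N) :
    ⁅a, g * b * g⁻¹⁆ ∈ N := by
  rcases h with ha | hb
  · exact commutator_le_left N ⊤ (commutator_mem_commutator ha (mem_top g))
  · exact commutator_le_right ⊤ N
      (commutator_mem_commutator (mem_top a) (Normal.conj_mem ‹_› b hb g))

theorem Nat.two_mul_sq_half_add_sq_le (m : ℕ) : 2 * ((m / 2) ^ 2 + (m - m / 2) ^ 2) ≤ m ^ 2 + 1 := by
  rcases Nat.even_or_odd' m with ⟨p, rfl | rfl⟩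
  · rw [show 2 * p / 2 = p by omega, show 2 * p - p = p by omega]
    nlinarith
  · rw [show (2 * p + 1) / 2 = p by omega, show 2 * p + 1 - p = p + 1 by omega]
    nlinarith

namespace FreeGroup

variable {α : Type*}

open IsFreeGroup

theorem commute_sq_of_commute_conj {b s : FreeGroup α} (hb : b ≠ 1)
    (hs : Commute b (s * b * s⁻¹)) : Commute (s ^ 2) b := by
  have := isCyclic_centralizer hb
  obtain ⟨⟨z, hzb⟩, hz⟩ := IsCyclic.exists_generator (α := Subgroup.centralizer {b})
  have zpow_of_commute (g : FreeGroup α) (hg : Commute g b) : ∃ k : ℤ, z ^ k = g := by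
    obtain ⟨k, hk⟩ :=
      Subgroup.mem_zpowers_iff.mp (hz ⟨g, Subgroup.mem_centralizer_singleton_iff.mpr hg⟩)
    exact ⟨k, congrArg Subtype.val hk⟩
  have hzb : Commute z b := Subgroup.mem_centralizer_singleton_iff.mp hzb
  have hs' : Commute b (s⁻¹ * b * s⁻¹⁻¹) := by
    simpa [mul_assoc] using (hs.map (MulAut.conj s⁻¹)).symm
  obtain ⟨k, hk⟩ := zpow_of_commute _ (commute_conj_of_commute_conj hb hs hzb)
  obtain ⟨l, hl⟩ := zpow_of_commute _ (commute_conj_of_commute_conj hb hs' hzb)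
  obtain ⟨m, rfl⟩ := zpow_of_commute b (Commute.refl b)
  exact (commute_sq_of_conj_eq_zpow hk.symm (by simpa using hl.symm)).zpow_right m

theorem not_commute_sq_of_ne {x y : α} (hxy : x ≠ y) : ¬Commute (of x ^ 2) (of y ^ 2) := by
  have sq_ne_one (t : α) : of t ^ 2 ≠ 1 := (pow_eq_one_iff_left two_ne_zero).not.mpr (of_ne_one t)
  intro h
  have hx : Commute (of x) (of y ^ 2) :=
    commute_of_commute_of_commute (sq_ne_one x) ((Commute.refl _).pow_left 2) h
  exact hxy (commute_of_of_iff.mp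
    (commute_of_commute_of_commute (sq_ne_one y) hx.symm ((Commute.refl _).pow_left 2)))

variable [DecidableEq α]

theorem exists_norm_le_one_not_commute_conj [Nontrivial α] {a b : FreeGroup α}
    (ha : a ≠ 1) (hb : b ≠ 1) : ∃ g : FreeGroup α, g.norm ≤ 1 ∧ ¬Commute a (g * b * g⁻¹) := by
  by_contra! h
  obtain ⟨x, y, hxy⟩ := exists_pair_ne α
  have hab : Commute a b := by simpa using h 1 (by simp)
  have hsq (t : α) : Commute (of t ^ 2) b :=
    commute_sq_of_commute_conj hb (commute_of_commute_of_commute ha hab (h (of t) (norm_of t).le))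
  exact not_commute_sq_of_ne hxy (commute_of_commute_of_commute hb (hsq x).symm (hsq y).symm)

theorem norm_conj_le (g b : FreeGroup α) : (g * b * g⁻¹).norm ≤ b.norm + 2 * g.norm := by
  have := norm_mul_le (g * b) g⁻¹
  have := norm_mul_le g b
  rw [norm_inv_eq] at *
  omega

theorem norm_commutatorElement_le (a b : FreeGroup α) :
    ⁅a, b⁆.norm ≤ 2 * a.norm + 2 * b.norm := by
  rw [commutatorElement_def]
  have := norm_mul_le (a * b * a⁻¹) b⁻¹
  have := norm_conj_le a b
  rw [norm_inv_eq] at *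
  omega

open Finset in
theorem exists_ne_one_mem_normalClosure_norm_le [Nontrivial α] {d : ℕ}
    (S : Finset (FreeGroup α)) (hS : S.Nonempty) (hne : ∀ γ ∈ S, γ ≠ 1)
    (hlen : ∀ γ ∈ S, γ.norm ≤ d) :
    ∃ δ : FreeGroup α, δ ≠ 1 ∧ (∀ γ ∈ S, δ ∈ Subgroup.normalClosure {γ}) ∧
      δ.norm + 5 * d ≤ 6 * d * #S ^ 2 := by
  induction hm : #S using Nat.strong_induction_on generalizing S with
  | _ m IH =>
  obtain ⟨γ₀, hγ₀⟩ := hS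
  have hd : 1 ≤ d :=
    (Nat.one_le_iff_ne_zero.mpr (norm_eq_zero.not.mpr (hne γ₀ hγ₀))).trans (hlen γ₀ hγ₀)
  obtain hm1 | hm2 : m = 1 ∨ 2 ≤ m := by have := card_pos.mpr ⟨γ₀, hγ₀⟩; omega
  · obtain ⟨γ, rfl⟩ := card_eq_one.mp (hm.trans hm1)
    refine ⟨γ, hne γ (mem_singleton_self γ), ?_, ?_⟩
    · simpa using Subgroup.subset_normalClosure (Set.mem_singleton γ)
    · have := hlen γ (mem_singleton_self γ)
      rw [hm1]
      omega
  obtain ⟨T, hTS, hT⟩ := exists_subset_card_eq (show m / 2 ≤ #S by omega)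
  have hU : #(S \ T) = m - m / 2 := by rw [card_sdiff_of_subset hTS, hT, hm]
  obtain ⟨δ₁, hδ₁, hmem₁, hnorm₁⟩ := IH (m / 2) (by omega) T (card_pos.mp (by omega))
    (fun γ hγ => hne γ (hTS hγ)) (fun γ hγ => hlen γ (hTS hγ)) hT
  obtain ⟨δ₂, hδ₂, hmem₂, hnorm₂⟩ := IH (m - m / 2) (by omega) (S \ T) (card_pos.mp (by omega))
    (fun γ hγ => hne γ (sdiff_subset hγ)) (fun γ hγ => hlen γ (sdiff_subset hγ)) hU
  obtain ⟨g, hg, hcomm⟩ := exists_norm_le_one_not_commute_conj hδ₁ hδ₂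
  refine ⟨⁅δ₁, g * δ₂ * g⁻¹⁆, commutatorElement_eq_one_iff_commute.not.mpr hcomm,
    fun γ hγ => ?_, ?_⟩
  · by_cases hγT : γ ∈ T
    · exact Subgroup.commutatorElement_conj_mem_of_mem_or_mem g (.inl (hmem₁ γ hγT))
    · exact Subgroup.commutatorElement_conj_mem_of_mem_or_mem g
        (.inr (hmem₂ γ (mem_sdiff.mpr ⟨hγ, hγT⟩)))
  · have := norm_commutatorElement_le δ₁ (g * δ₂ * g⁻¹)
    have := norm_conj_le g δ₂
    have := Nat.two_mul_sq_half_add_sq_le m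
    nlinarith

end FreeGroup

theorem stmt_4 (X : Type) [Fintype X] [DecidableEq X] (hX : 2 ≤ Fintype.card X)
    (n d : ℕ) (hn : 1 ≤ n) (γ : Fin n → FreeGroup X)
    (hne : ∀ j, γ j ≠ 1) (hlen : ∀ j, (γ j).norm ≤ d) :
    ∃ δ : FreeGroup X, δ ≠ 1 ∧
      (∀ j, δ ∈ Subgroup.normalClosure {γ j}) ∧
      δ.norm ≤ 6 * d * n ^ 2 := by
  have : Nontrivial X := Fintype.one_lt_card_iff_nontrivial.mp hX
  have : Nonempty (Fin n) := ⟨⟨0, hn⟩⟩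
  obtain ⟨δ, hδ, hmem, hnorm⟩ := FreeGroup.exists_ne_one_mem_normalClosure_norm_le
    (Finset.univ.image γ) (Finset.univ_nonempty.image γ) (by simpa using hne) (by simpa using hlen)
  refine ⟨δ, hδ, fun j => hmem _ (Finset.mem_image_of_mem γ (Finset.mem_univ j)), ?_⟩
  have hcard : (Finset.univ.image γ).card ≤ n := Finset.card_image_le.trans (by simp)
  calc δ.norm ≤ 6 * d * (Finset.univ.image γ).card ^ 2 := by omega
    _ ≤ 6 * d * n ^ 2 := by gcongr
end

section
/- Define $\mathrm{D}^{\lhd}_{F}(\gamma) = \min\{[F:\Delta] : \Delta \trianglelefteq F, [F:\Delta] < \infty, \gamma \notin \Delta\}$ for nontrivial $\gamma$ in a free group $F$ of rank $m \geq 2$ with basis $X$. Then for every $n \geq 1$ there exists a nontrivial $\delta \in F$ with $\|\delta\|_X \leq 6 n^3$ and $\mathrm{D}^{\lhd}_F(\delta) > n$. Consequently $n^{1/3} \preceq \mathrm{D}^{\lhd}_F(n) := \max\{\mathrm{D}^{\lhd}_F(\gamma) : 1 \neq \gamma, \|\gamma\|_X \leq n\}$, where $f \preceq g$ means $f(n)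 \leq C g(Cn)$ for some constant $C$ and all $n$. -/
/-- The minimal index of a finite-index normal subgroup of `F` excluding `γ`. -/
noncomputable def normalDiv {F : Type*} [Group F] (γ : F) : ℕ :=
  sInf {k | ∃ Δ : Subgroup F, Δ.Normal ∧ Δ.FiniteIndex ∧ γ ∉ Δ ∧ Δ.index = k}

/-- The maximum of `normalDiv` over nontrivial elements of word length at most `n`. -/
noncomputable def normalDivMax (X : Type) [DecidableEq X] (n : ℕ) : ℕ :=
  sSup {k | ∃ γ : FreeGroup X, γ ≠ 1 ∧ γ.norm ≤ n ∧ normalDiv γ = k}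

/-!
If `γ` lies in the normal closure of `a ^ j` for every `1 ≤ j ≤ n`, then `γ` survives only in
finite quotients of index `> n`: in a quotient of index `≤ n` the image of `a` has some order
`j ≤ n`, so `a ^ j`, and with it `γ`, dies. Such a `γ` is the iterated commutator
`δ_{s+1} = b ⁅δ_s, a δ_s' a⁻¹⁆ b⁻¹` of a balanced binary tree whose `2 ^ s` leaves are the
conjugates `b a ^ j b⁻¹`. Since every `δ_s` is a reduced word beginning with `b` and ending with
`b⁻¹`, the word of `δ_{s+1}` is the plain concatenation, so `δ_s ≠ 1` and its length, of order
`8 ^ s`, is cubic in `n ≈ 2 ^ s`. Finally, free groups are residually finite (a reduced word of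
length `k` moves the endpoint of a path on `{0, …, k}` to its start), so the infimum defining
`normalDiv δ` is attained rather than the junk value `sInf ∅ = 0`.
-/

open FreeGroup
open scoped commutatorElement

theorem Relator.BiUnique.exists_perm {α : Type*} [Finite α] {r : α → α → Prop}
    (hr : Relator.BiUnique r) : ∃ σ : Equiv.Perm α, ∀ x y, r x y → σ x = y := by
  classical
  have := Fintype.ofFinite α
  let f : α → α := fun x => if h : ∃ y, r x y then h.choose else x
  have hf : ∀ x y, r x y → f x = y := fun x y hxy => by
    have h : ∃ y, r x y := ⟨y, hxy⟩
    simp only [f, dif_pos h]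
    exact hr.2 h.choose_spec hxy
  obtain ⟨g, hg⟩ := Set.MapsTo.exists_equiv_extend_of_card_eq (t := Finset.univ) (f := f)
    Finset.card_univ.symm (s := {x | ∃ y, r x y}) (fun _ _ => Finset.mem_coe.2 (Finset.mem_univ _))
    (fun x ⟨y, hxy⟩ x' ⟨y', hxy'⟩ h => by
      rw [hf x y hxy, hf x' y' hxy'] at h
      exact hr.1 hxy (h ▸ hxy'))
  refine ⟨g.trans (Equiv.subtypeUnivEquiv Finset.mem_univ), fun x y hxy => ?_⟩
  simp [hg x ⟨y, hxy⟩, hf x y hxy]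

namespace FreeGroup

variable {α : Type*}

section ResiduallyFinite

theorem IsReduced.not_cancel {L : List (α × Bool)} (hL : IsReduced L) {i j : ℕ}
    (hi : i < L.length) (hj : j < L.length) (hij : j = i + 1) {c : α} {e : Bool}
    (h₁ : L[i] = (c, e)) (h₂ : L[j] = (c, !e)) : False := by
  subst hij
  have := List.isChain_iff_getElem.mp hL i hj
  simp [h₁, h₂] at this

/-- A word `L = L[0] ⋯ L[k-1]` is made to act on `{0, …, k}` so that its letter `L[i]` moves
`i + 1` to `i`. `LetterStep L c x y` is the resulting constraint `σ c x = y` on the permutation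
`σ c` attached to the generator `c`. -/
def LetterStep (L : List (α × Bool)) (c : α) (x y : ℕ) : Prop :=
  ∃ i, ∃ hi : i < L.length,
    (L[i] = (c, true) ∧ x = i + 1 ∧ y = i) ∨ (L[i] = (c, false) ∧ x = i ∧ y = i + 1)

theorem IsReduced.biUnique_letterStep {L : List (α × Bool)} (hL : IsReduced L) (c : α) :
    Relator.BiUnique fun x y : Fin (L.length + 1) => LetterStep L c x y := by
  constructor <;>
  · rintro x y z ⟨i, hi, ⟨hx, h1, h2⟩ | ⟨hx, h1, h2⟩⟩ ⟨j, hj, ⟨hy, h3, h4⟩ | ⟨hy, h3, h4⟩⟩ <;>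
    first
    | exact Fin.ext (by omega)
    | exact (hL.not_cancel hi hj (by omega) hx hy).elim
    | exact (hL.not_cancel hj hi (by omega) hy hx).elim

theorem lift_mk_take_apply {L : List (α × Bool)} {σ : α → Equiv.Perm (Fin (L.length + 1))}
    (hσ : ∀ c (x y : Fin (L.length + 1)), LetterStep L c x y → σ c x = y) :
    ∀ j (hj : j ≤ L.length), lift σ (mk (L.take j)) ⟨j, by omega⟩ = 0
  | 0, _ => by simp
  | j + 1, hj => by
    have hj' : j < L.length := hj
    rw [List.take_add_one, List.getElem?_eq_getElem hj', Option.toList_some, ← mul_mk,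
      _root_.map_mul, Equiv.Perm.mul_apply]
    convert lift_mk_take_apply hσ j hj'.le using 2
    rcases hL : L[j] with ⟨c, _ | _⟩
    · rw [lift_mk]
      simp only [List.map_cons, List.map_nil, List.prod_singleton, cond_false,
        Equiv.Perm.inv_eq_iff_eq]
      exact (hσ c _ _ ⟨j, hj', .inr ⟨hL, rfl, rfl⟩⟩).symm
    · simpa [lift_mk] using hσ c _ _ ⟨j, hj', .inl ⟨hL, rfl, rfl⟩⟩

theorem exists_perm_apply_ne [DecidableEq α] (w : FreeGroup α) (hw : w ≠ 1) :
    ∃ (k : ℕ) (f : FreeGroup α →* Equiv.Perm (Fin (k + 1))), f w ≠ 1 := by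
  set L := w.toWord
  choose σ hσ using fun c => ((isReduced_toWord (x := w)).biUnique_letterStep c).exists_perm
  refine ⟨L.length, lift σ, fun h => ?_⟩
  have := lift_mk_take_apply hσ L.length le_rfl
  rw [List.take_length, mk_toWord, h] at this
  simp [Fin.ext_iff, L, toWord_eq_nil_iff, hw] at this

instance : Group.ResiduallyFinite (FreeGroup α) := by
  classical
  refine Group.residuallyFinite_of_forall_exists_finite_monoidHom fun w hw => ?_
  obtain ⟨k, f, hf⟩ := exists_perm_apply_ne w hw
  exact ⟨_, _, inferInstance, f, hf⟩

end ResiduallyFinite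

theorem finite_setOf_norm_le [DecidableEq α] [Finite α] (N : ℕ) :
    {x : FreeGroup α | x.norm ≤ N}.Finite :=
  ((List.finite_length_le _ N).preimage toWord_injective.injOn).subset fun _ hx => hx

section NestedCommutator

variable {a b : α}

def IsFramedBy (b : α) (L : List (α × Bool)) : Prop :=
  IsReduced L ∧ L.head? = some (b, true) ∧ L.getLast? = some (b, false)

theorem isFramedBy_conj_replicate (hab : a ≠ b) (n : ℕ) :
    IsFramedBy b ((b, true) :: List.replicate (n + 1) (a, true) ++ [(b, false)]) := by
  refine ⟨?_, rfl, by simp [List.getLast?_cons, List.getLast?_append]⟩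
  simp [IsReduced, List.isChain_append, List.isChain_cons, List.head?_replicate,
    List.getLast?_replicate, hab, hab.symm, List.isChain_replicate_of_rel]

theorem IsFramedBy.conj_commutator_word (hab : a ≠ b) {L₁ L₂ L₃ L₄ : List (α × Bool)}
    (h₁ : IsFramedBy b L₁) (h₂ : IsFramedBy b L₂) (h₃ : IsFramedBy b L₃) (h₄ : IsFramedBy b L₄) :
    IsFramedBy b ((b, true) :: L₁ ++ (a, true) :: L₂ ++ (a, false) :: L₃ ++ (a, true) :: L₄ ++
      [(a, false), (b, false)]) := by
  obtain ⟨r₁, s₁, e₁⟩ := h₁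
  obtain ⟨r₂, s₂, e₂⟩ := h₂
  obtain ⟨r₃, s₃, e₃⟩ := h₃
  obtain ⟨r₄, s₄, e₄⟩ := h₄
  refine ⟨?_, rfl, by simp [List.getLast?_cons, List.getLast?_append]⟩
  simp [IsReduced, List.isChain_append, List.isChain_cons, s₁, e₁, s₂, e₂, s₃, e₃, s₄, e₄, hab,
    hab.symm]
  exact ⟨r₁, r₂, r₃, r₄⟩

theorem mk_cons_true (c : α) (L : List (α × Bool)) : mk ((c, true) :: L) = of c * mk L := by
  rw [of, mul_mk, List.singleton_append]

theorem mk_cons_false (c : α) (L : List (α × Bool)) :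
    mk ((c, false) :: L) = (of c)⁻¹ * mk L := by
  rw [of, inv_mk, mul_mk]; rfl

variable (a b) in
def nestedComm : ℕ → ℕ → FreeGroup α
  | 0, lo => of b * of a ^ (lo + 1) * (of b)⁻¹
  | s + 1, lo =>
    of b * ⁅nestedComm s lo, of a * nestedComm s (lo + 2 ^ s) * (of a)⁻¹⁆ * (of b)⁻¹

theorem nestedComm_mem_normalClosure (s lo j : ℕ) (h₁ : lo < j) (h₂ : j ≤ lo + 2 ^ s) :
    nestedComm a b s lo ∈ Subgroup.normalClosure {of a ^ j} := by
  have hN : (Subgroup.normalClosure {(of a : FreeGroup α) ^ j}).Normal :=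
    Subgroup.normalClosure_normal
  induction s generalizing lo with
  | zero =>
    obtain rfl : j = lo + 1 := by simp at h₂; omega
    exact hN.conj_mem _ (Subgroup.subset_normalClosure rfl) _
  | succ s ih =>
    refine hN.conj_mem _ ?_ _
    by_cases hj : j ≤ lo + 2 ^ s
    · exact Subgroup.commutator_le_left _ ⊤
        (Subgroup.commutator_mem_commutator (ih lo h₁ hj) (Subgroup.mem_top _))
    · refine Subgroup.commutator_le_right ⊤ _
        (Subgroup.commutator_mem_commutator (Subgroup.mem_top _) (hN.conj_mem _ ?_ _))
      exact ih (lo + 2 ^ s) (by omega) (by rw [pow_succ] at h₂; omega)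

variable [DecidableEq α]

theorem IsFramedBy.toWord_inv {g : FreeGroup α} (hg : IsFramedBy b g.toWord) :
    IsFramedBy b g⁻¹.toWord := by
  obtain ⟨-, h1, h2⟩ := hg
  refine ⟨isReduced_toWord, ?_, ?_⟩ <;>
    simp [FreeGroup.toWord_inv, invRev, List.head?_reverse, List.getLast?_reverse, h1, h2]

theorem toWord_conj_pow (hab : a ≠ b) (n : ℕ) :
    (of b * of a ^ (n + 1) * (of b)⁻¹).toWord =
      (b, true) :: List.replicate (n + 1) (a, true) ++ [(b, false)] := by
  rw [← (isFramedBy_conj_replicate hab n).1.reduce_eq, ← toWord_mk, ← toWord_of_pow]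
  simp only [List.cons_append, mk_cons_true, ← mul_mk, mk_toWord, mk_cons_false, ← one_eq_mk,
    mul_one, mul_assoc]

theorem toWord_conj_commutatorElement (hab : a ≠ b) {g h : FreeGroup α}
    (hg : IsFramedBy b g.toWord) (hh : IsFramedBy b h.toWord) :
    (of b * ⁅g, of a * h * (of a)⁻¹⁆ * (of b)⁻¹).toWord =
      (b, true) :: g.toWord ++ (a, true) :: h.toWord ++ (a, false) :: g⁻¹.toWord ++
        (a, true) :: h⁻¹.toWord ++ [(a, false), (b, false)] := by
  rw [← (hg.conj_commutator_word hab hh hg.toWord_inv hh.toWord_inv).1.reduce_eq, ← toWord_mk]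
  congr 1
  simp only [List.cons_append, List.append_assoc, mk_cons_true, mk_cons_false, ← mul_mk,
    mk_toWord, ← one_eq_mk, commutatorElement_def]
  group

theorem isFramedBy_toWord_nestedComm (hab : a ≠ b) (s lo : ℕ) :
    IsFramedBy b (nestedComm a b s lo).toWord := by
  induction s generalizing lo with
  | zero => simpa only [nestedComm, toWord_conj_pow hab] using isFramedBy_conj_replicate hab lo
  | succ s ih =>
    rw [nestedComm, toWord_conj_commutatorElement hab (ih _) (ih _)]
    exact (ih _).conj_commutator_word hab (ih _) (ih _).toWord_inv (ih _).toWord_inv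

theorem nestedComm_ne_one (hab : a ≠ b) (s lo : ℕ) : nestedComm a b s lo ≠ 1 := by
  intro h
  rw [← toWord_eq_nil_iff] at h
  simpa [h] using (isFramedBy_toWord_nestedComm hab s lo).2.1

theorem two_mul_norm_nestedComm_add_four (hab : a ≠ b) (s lo : ℕ) :
    2 * (nestedComm a b s lo).norm + 4 = (2 ^ s) ^ 2 * (2 * lo + 2 ^ s + 9) := by
  induction s generalizing lo with
  | zero =>
    simp only [norm, nestedComm, toWord_conj_pow hab, List.length_append, List.length_cons,
      List.length_replicate, List.length_nil, pow_zero]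
    ring
  | succ s ih =>
    have hA := ih lo
    have hB := ih (lo + 2 ^ s)
    simp only [norm] at hA hB ⊢
    rw [nestedComm, toWord_conj_commutatorElement hab (isFramedBy_toWord_nestedComm hab _ _)
      (isFramedBy_toWord_nestedComm hab _ _)]
    simp only [FreeGroup.toWord_inv, invRev_length, List.length_append, List.length_cons,
      List.length_nil]
    rw [pow_succ 2 s]
    linarith

end NestedCommutator

end FreeGroup

section NormalDiv

variable {G : Type*} [Group G]

theorem exists_index_eq_normalDiv [Group.ResiduallyFinite G] {γ : G} (hγ : γ ≠ 1) :
    ∃ Δ : Subgroup G, Δ.Normal ∧ Δ.FiniteIndex ∧ γ ∉ Δ ∧ Δ.index = normalDiv γ := by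
  obtain ⟨Δ, hγΔ⟩ := Group.exists_finiteIndexNormalSubgroup_notMem γ hγ
  exact Nat.sInf_mem
    (s := {k | ∃ Δ : Subgroup G, Δ.Normal ∧ Δ.FiniteIndex ∧ γ ∉ Δ ∧ Δ.index = k})
    ⟨_, Δ.toSubgroup, Δ.isNormal', Δ.isFiniteIndex', hγΔ, rfl⟩

theorem lt_normalDiv_of_forall_mem_normalClosure [Group.ResiduallyFinite G] {γ g : G} {n : ℕ}
    (hγ : γ ≠ 1) (h : ∀ j, 1 ≤ j → j ≤ n → γ ∈ Subgroup.normalClosure {g ^ j}) :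
    n < normalDiv γ := by
  obtain ⟨Δ, hΔ, hfin, hγΔ, hidx⟩ := exists_index_eq_normalDiv hγ
  rw [← hidx]
  by_contra! hle
  set j := orderOf (g : G ⧸ Δ)
  have hj : 0 < j := orderOf_pos _
  have hjn : j ≤ n := (Nat.le_of_dvd hfin.index_ne_zero.bot_lt (orderOf_dvd_natCard _)).trans hle
  have hgj : g ^ j ∈ Δ := by
    rw [← QuotientGroup.eq_one_iff, QuotientGroup.mk_pow, pow_orderOf_eq_one]
  exact hγΔ (Subgroup.normalClosure_le_normal (Set.singleton_subset_iff.2 hgj) (h j hj hjn))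

end NormalDiv

theorem normalDiv_le_normalDivMax {X : Type} [DecidableEq X] [Finite X] {γ : FreeGroup X}
    {N : ℕ} (hγ : γ ≠ 1) (hN : γ.norm ≤ N) : normalDiv γ ≤ normalDivMax X N := by
  refine le_csSup (((finite_setOf_norm_le (α := X) N).image normalDiv).subset ?_).bddAbove
    ⟨γ, hγ, hN, rfl⟩
  rintro _ ⟨δ, -, hδ, rfl⟩
  exact ⟨δ, hδ, rfl⟩

theorem two_pow_clog_le {n : ℕ} (hn : 2 ≤ n) : 2 ^ Nat.clog 2 n ≤ 2 * (n - 1) := by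
  have hs : 0 < Nat.clog 2 n := Nat.clog_pos one_lt_two hn
  have := Nat.pow_pred_clog_lt_self one_lt_two hn
  rw [← Nat.succ_pred_eq_of_pos hs, pow_succ]
  omega

theorem two_pow_clog_sq_mul_le {n : ℕ} (hn : 1 ≤ n) :
    (2 ^ Nat.clog 2 n) ^ 2 * (2 ^ Nat.clog 2 n + 9) ≤ 12 * n ^ 3 + 4 := by
  obtain rfl | hn2 := hn.eq_or_lt
  · simp
  have hm := two_pow_clog_le hn2
  obtain ⟨q, rfl⟩ : ∃ q, n = q + 1 := ⟨n - 1, by omega⟩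
  rw [Nat.add_sub_cancel] at hm
  nlinarith [pow_le_pow_left₀ (Nat.zero_le _) hm 2, pow_le_pow_left₀ (Nat.zero_le _) hm 3]

theorem FreeGroup.exists_norm_le_lt_normalDiv {X : Type*} [DecidableEq X] {a b : X}
    (hab : a ≠ b) {n : ℕ} (hn : 1 ≤ n) :
    ∃ δ : FreeGroup X, δ ≠ 1 ∧ δ.norm ≤ 6 * n ^ 3 ∧ n < normalDiv δ := by
  set s := Nat.clog 2 n
  refine ⟨nestedComm a b s 0, nestedComm_ne_one hab s 0, ?_, ?_⟩
  · linarith [two_mul_norm_nestedComm_add_four hab s 0, two_pow_clog_sq_mul_le hn]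
  · exact lt_normalDiv_of_forall_mem_normalClosure (nestedComm_ne_one hab s 0) fun j hj hjn =>
      nestedComm_mem_normalClosure s 0 j hj
        (by simpa using hjn.trans (Nat.le_pow_clog one_lt_two n))

theorem Nat.cast_rpow_one_div_lt_nthRoot_add_one {k : ℕ} (hk : k ≠ 0) (n : ℕ) :
    (n : ℝ) ^ ((1 : ℝ) / k) < Nat.nthRoot k n + 1 := by
  have h := Nat.lt_pow_nthRoot_add_one hk n
  calc (n : ℝ) ^ ((1 : ℝ) / k)
      < (((Nat.nthRoot k n + 1 : ℕ) : ℝ) ^ k) ^ ((1 : ℝ) / k) := by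
        refine Real.rpow_lt_rpow (Nat.cast_nonneg n) (by exact_mod_cast h) (by positivity)
    _ = Nat.nthRoot k n + 1 := by
        rw [one_div, Real.pow_rpow_inv_natCast (by positivity) hk]
        push_cast; rfl

theorem stmt_9 (X : Type) [Fintype X] [DecidableEq X] (hX : 2 ≤ Fintype.card X) :
    (∀ n : ℕ, 1 ≤ n → ∃ δ : FreeGroup X, δ ≠ 1 ∧ δ.norm ≤ 6 * n ^ 3 ∧
      n < normalDiv δ) ∧
    ∃ C : ℕ, 0 < C ∧ ∀ n : ℕ,
      (n : ℝ) ^ ((1 : ℝ) / 3) ≤ C * normalDivMax X (C * n) := by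
  obtain ⟨a, b, hab⟩ := Fintype.exists_pair_of_one_lt_card hX
  refine ⟨fun n hn => exists_norm_le_lt_normalDiv hab hn, 6, by norm_num, fun n => ?_⟩
  obtain rfl | hn := Nat.eq_zero_or_pos n
  · simp
  have hroot := Nat.cast_rpow_one_div_lt_nthRoot_add_one three_ne_zero n
  set m := Nat.nthRoot 3 n
  have hm : 1 ≤ m := (Nat.le_nthRoot_iff three_ne_zero).2 (by rw [one_pow]; exact hn)
  have hm3 : m ^ 3 ≤ n := Nat.pow_nthRoot_le_iff.2 (.inl three_ne_zero)
  obtain ⟨δ, hδ, hδn, hmδ⟩ := exists_norm_le_lt_normalDiv hab hm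
  have hmax : m + 1 ≤ normalDivMax X (6 * n) :=
    hmδ.trans_le (normalDiv_le_normalDivMax hδ (by omega))
  have hmax' : (m : ℝ) + 1 ≤ normalDivMax X (6 * n) := by exact_mod_cast hmax
  push_cast at hroot ⊢
  linarith
end
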